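/- For any finite family of points a_1,...,a_m and b_1,...,b_n in R^d, the empirical energy statistic E = (2/(mn)) ∑_{i,j} ‖a_i − b_j‖ − (1/m²) ∑_{i,j} ‖a_i − a_j‖ − (1/n²) ∑_{i,j} ‖b_i − b_j‖ is nonnegative. -/

import Mathlib

/-!
The statistic equals `-∑ c_p c_q ‖z_p - z_q‖` for the pooled sample `z = (a, b)` with weights
`c = (1/m, …, 1/m, -1/n, …, -1/n)`, which sum to zero; so it suffices that the Euclidean norm is of
negative type. On the line, `|x - y| = ∫ (1_{t ≥ x} - 1_{t ≥ y})² dt`, and when `∑ c_i = 0` one has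
`∑ c_i c_j (f_i - f_j)² = -2 (∑ c_i f_i)² ≤ 0`. In an inner product space, rotation invariance
makes `∫ |⟪s, v⟫| (1 - ‖s‖)⁺ ds` (a tent weight) a positive multiple of `‖v‖`, which reduces to
the line.
-/

open MeasureTheory Set RealInnerProductSpace

theorem sum_sum_mul_mul_sq_sub {R ι : Type*} [CommRing R] [Fintype ι] {c : ι → R}
    (hc : ∑ i, c i = 0) (f : ι → R) :
    ∑ i, ∑ j, c i * c j * (f i - f j) ^ 2 = -2 * (∑ i, c i * f i) ^ 2 := by
  have expand : ∀ i j, c i * c j * (f i - f j) ^ 2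
      = c i * f i ^ 2 * c j + c i * (c j * f j ^ 2) - 2 * (c i * f i) * (c j * f j) :=
    fun i j => by ring
  simp only [expand, Finset.sum_sub_distrib, Finset.sum_add_distrib, ← Finset.mul_sum,
    ← Finset.sum_mul, hc]
  ring

theorem integral_sum_sum_mul_mul {α ι : Type*} [MeasurableSpace α] {μ : Measure α} [Fintype ι]
    (c : ι → ℝ) {F : ι → ι → α → ℝ} (hF : ∀ i j, Integrable (F i j) μ) :
    ∫ a, ∑ i, ∑ j, c i * c j * F i j a ∂μ = ∑ i, ∑ j, c i * c j * ∫ a, F i j a ∂μ := by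
  rw [integral_finsetSum _ fun i _ => integrable_finsetSum _ fun j _ => (hF i j).const_mul _]
  refine Finset.sum_congr rfl fun i _ => ?_
  rw [integral_finsetSum _ fun j _ => (hF i j).const_mul _]
  simp only [integral_const_mul]

theorem sq_indicator_Ici_sub_indicator_Ici {x y : ℝ} (h : x ≤ y) (t : ℝ) :
    ((Ici x).indicator 1 t - (Ici y).indicator 1 t) ^ 2 = (Ico x y).indicator (1 : ℝ → ℝ) t := by
  rw [← Pi.sub_apply, ← indicator_sdiff (Ici_subset_Ici.2 h), Ici_sdiff_Ici, indicator_apply]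
  split_ifs <;> norm_num

theorem integrable_sq_indicator_Ici_sub_indicator_Ici (x y : ℝ) :
    Integrable fun t => ((Ici x).indicator (1 : ℝ → ℝ) t - (Ici y).indicator 1 t) ^ 2 := by
  wlog h : x ≤ y generalizing x y
  · simpa only [sub_sq_comm] using this y x (le_of_not_ge h)
  simp only [sq_indicator_Ici_sub_indicator_Ici h]
  exact (integrable_indicator_iff measurableSet_Ico).2 (integrableOn_const (by simp))

theorem integral_sq_indicator_Ici_sub_indicator_Ici (x y : ℝ) :
    ∫ t, ((Ici x).indicator (1 : ℝ → ℝ) t - (Ici y).indicator 1 t) ^ 2 = |x - y| := by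
  wlog h : x ≤ y generalizing x y
  · simpa only [sub_sq_comm, abs_sub_comm] using this y x (le_of_not_ge h)
  simp only [sq_indicator_Ici_sub_indicator_Ici h]
  rw [integral_indicator_one measurableSet_Ico]
  simp [abs_of_nonpos (sub_nonpos.2 h), h]

theorem sum_sum_mul_mul_abs_sub_nonpos {ι : Type*} [Fintype ι] {c : ι → ℝ} (hc : ∑ i, c i = 0)
    (x : ι → ℝ) : ∑ i, ∑ j, c i * c j * |x i - x j| ≤ 0 := by
  set g : ι → ℝ → ℝ := fun i => (Ici (x i)).indicator 1
  calc ∑ i, ∑ j, c i * c j * |x i - x j|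
      = ∫ t, ∑ i, ∑ j, c i * c j * (g i t - g j t) ^ 2 := by
        rw [integral_sum_sum_mul_mul c fun i j => integrable_sq_indicator_Ici_sub_indicator_Ici _ _]
        simp only [integral_sq_indicator_Ici_sub_indicator_Ici]
    _ = ∫ t, -2 * (∑ i, c i * g i t) ^ 2 := by simp only [sum_sum_mul_mul_sq_sub hc]
    _ ≤ 0 := integral_nonpos fun t => by
        have := sq_nonneg (∑ i, c i * g i t)
        simp only [Pi.zero_apply]
        linarith

section InnerProductSpace

variable {E : Type*} [NormedAddCommGroup E] [InnerProductSpace ℝ E]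

theorem continuous_abs_inner_mul_tent (v : E) :
    Continuous fun s : E => |⟪s, v⟫| * max (1 - ‖s‖) 0 := by
  fun_prop

variable [FiniteDimensional ℝ E]

theorem hasCompactSupport_abs_inner_mul_tent (v : E) :
    HasCompactSupport fun s : E => |⟪s, v⟫| * max (1 - ‖s‖) 0 :=
  HasCompactSupport.intro (isCompact_closedBall 0 1) fun s hs => by
    simp only [Metric.mem_closedBall, dist_zero_right, not_le] at hs
    simp [hs.le]

variable [MeasurableSpace E] [BorelSpace E]

noncomputable def meanAbsInner (v : E) : ℝ := ∫ s, |⟪s, v⟫| * max (1 - ‖s‖) 0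

theorem integrable_abs_inner_mul_tent (v : E) :
    Integrable fun s : E => |⟪s, v⟫| * max (1 - ‖s‖) 0 :=
  (continuous_abs_inner_mul_tent v).integrable_of_hasCompactSupport
    (hasCompactSupport_abs_inner_mul_tent v)

theorem meanAbsInner_smul (r : ℝ) (v : E) : meanAbsInner (r • v) = |r| * meanAbsInner v := by
  simp only [meanAbsInner, inner_smul_right, abs_mul, mul_assoc, integral_const_mul]

theorem meanAbsInner_map (T : E ≃ₗᵢ[ℝ] E) (v : E) : meanAbsInner (T v) = meanAbsInner v := by
  rw [meanAbsInner, ← T.measurePreserving.integral_comp T.toHomeomorph.measurableEmbedding]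
  simp [meanAbsInner]

theorem meanAbsInner_eq_of_norm_eq {u w : E} (h : ‖u‖ = ‖w‖) :
    meanAbsInner u = meanAbsInner w := by
  rw [← Submodule.reflection_sub h, meanAbsInner_map]

theorem meanAbsInner_eq_norm_mul {u : E} (hu : ‖u‖ = 1) (v : E) :
    meanAbsInner v = ‖v‖ * meanAbsInner u := by
  rw [meanAbsInner_eq_of_norm_eq (w := ‖v‖ • u) (by simp [norm_smul, hu]), meanAbsInner_smul,
    abs_norm]

theorem meanAbsInner_pos {u : E} (hu : ‖u‖ = 1) : 0 < meanAbsInner u :=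
  (continuous_abs_inner_mul_tent u).integral_pos_of_hasCompactSupport_nonneg_nonzero
    (hasCompactSupport_abs_inner_mul_tent u) (fun s => by positivity) (x := (2⁻¹ : ℝ) • u)
    (by simp [inner_smul_left, norm_smul, hu]; norm_num)

theorem sum_sum_mul_mul_norm_sub_nonpos {ι : Type*} [Fintype ι] {c : ι → ℝ} (hc : ∑ i, c i = 0)
    (x : ι → E) : ∑ i, ∑ j, c i * c j * ‖x i - x j‖ ≤ 0 := by
  rcases subsingleton_or_nontrivial E with hE | hE
  · simp [norm_of_subsingleton]
  obtain ⟨u, hu⟩ := exists_norm_eq E zero_le_one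
  refine nonpos_of_mul_nonpos_left ?_ (meanAbsInner_pos hu)
  calc (∑ i, ∑ j, c i * c j * ‖x i - x j‖) * meanAbsInner u
      = ∫ s, ∑ i, ∑ j, c i * c j * (|⟪s, x i - x j⟫| * max (1 - ‖s‖) 0) := by
        rw [integral_sum_sum_mul_mul c fun i j => integrable_abs_inner_mul_tent _]
        simp only [Finset.sum_mul, mul_assoc, ← meanAbsInner_eq_norm_mul hu]
        rfl
    _ = ∫ s, (∑ i, ∑ j, c i * c j * |⟪s, x i⟫ - ⟪s, x j⟫|) * max (1 - ‖s‖) 0 := by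
        congr 1 with s
        simp only [Finset.sum_mul, mul_assoc, inner_sub_right]
    _ ≤ 0 := integral_nonpos fun s =>
        mul_nonpos_of_nonpos_of_nonneg (sum_sum_mul_mul_abs_sub_nonpos hc _) (le_max_right _ _)

end InnerProductSpace

open Finset in
/-- The empirical energy statistic is nonnegative. -/
theorem empirical_energy_nonneg (d m n : ℕ) (hm : 0 < m) (hn : 0 < n)
    (a : Fin m → EuclideanSpace ℝ (Fin d)) (b : Fin n → EuclideanSpace ℝ (Fin d)) :
    0 ≤ (2 / (m * n : ℝ)) * ∑ i, ∑ j, ‖a i - b j‖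
        - (1 / (m ^ 2 : ℝ)) * ∑ i, ∑ j, ‖a i - a j‖
        - (1 / (n ^ 2 : ℝ)) * ∑ i, ∑ j, ‖b i - b j‖ := by
  have hm0 : (m : ℝ) ≠ 0 := Nat.cast_ne_zero.2 hm.ne'
  have hn0 : (n : ℝ) ≠ 0 := Nat.cast_ne_zero.2 hn.ne'
  set c : Fin m ⊕ Fin n → ℝ := Sum.elim (fun _ => (m : ℝ)⁻¹) (fun _ => -(n : ℝ)⁻¹)
  have hc : ∑ p, c p = 0 := by simp [c, hm0, hn0]
  have h := sum_sum_mul_mul_norm_sub_nonpos hc (Sum.elim a b)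
  have hba : ∑ i, ∑ j, ‖b i - a j‖ = ∑ i, ∑ j, ‖a i - b j‖ := by
    rw [sum_comm]
    simp only [norm_sub_rev]
  simp only [Fintype.sum_sum_type, Sum.elim_inl, Sum.elim_inr, c, ← mul_sum, sum_add_distrib,
    hba] at h
  convert neg_nonneg.2 h using 1
  ring
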